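/- arXiv:2205.11167 — 2 statements merged into one kernel-verified Lean document; each statement's English description precedes it below -/
import Mathlib

section
/- The system of real polynomial equations 11/2 - 2x1 + 4y1 - 2x2 - x1x2/2 - y1x2 + x1y2 - y1y2/2 = 0, x1 - 2y1 + x2 - x1x2/2 + y1x2 - x1y2 - y1y2/2 - 3/2 = 0, x1^2 + y1^2 = 1, x2^2 + y2^2 = 1 has no real solutions (x1,y1,x2,y2). -/
theorem stmt14 :
    ¬ ∃ x1 y1 x2 y2 : ℝ,
      11/2 - 2*x1 + 4*y1 - 2*x2 - x1*x2/2 - y1*x2 + x1*y2 - y1*y2/2 = 0 ∧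
      x1 - 2*y1 + x2 - x1*x2/2 + y1*x2 - x1*y2 - y1*y2/2 - 3/2 = 0 ∧
      x1^2 + y1^2 = 1 ∧
      x2^2 + y2^2 = 1 := by
  rintro ⟨x1, y1, x2, y2, h1, h2, h3, h4⟩
  have h : x1 - 2*y1 + x2 + x1*x2 + y1*y2 = 4 := by linarith
  have key : (4 - x2)^2 ≤ 6 + 2*x2 - 4*y2 := by
    nlinarith [sq_nonneg (x1*(y2-2) - y1*(1+x2))]
  have hx2 : x2 ≤ 1 := by nlinarith [sq_nonneg y2]
  have hx2' : -1 ≤ x2 := by nlinarith [sq_nonneg y2]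
  have hp : x2^2 - 10*x2 + 10 + 4*y2 ≤ 0 := by nlinarith [key]
  have hppos : 0 < x2^2 - 10*x2 + 10 := by nlinarith
  have hsq : (x2^2 - 10*x2 + 10)^2 ≤ 16 * y2^2 := by nlinarith
  have hy2sq : y2^2 = 1 - x2^2 := by linarith
  have : 0 < x2^4 - 20*x2^3 + 136*x2^2 - 200*x2 + 84 := by
    nlinarith [sq_nonneg (x2^2 - 10*x2 + 9), sq_nonneg (x2-1), sq_nonneg (x2+1),
      mul_nonneg (sub_nonneg.2 hx2) (by linarith : (0:ℝ) ≤ x2+1),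
      sq_nonneg (x2 - 9/10),
      mul_nonneg (mul_nonneg (sub_nonneg.2 hx2) (by linarith : (0:ℝ) ≤ x2+1)) (sq_nonneg (x2-1))]
  nlinarith [hsq, hy2sq, this]
end

section
/- The group presented by ⟨x1, x2 | x2^{-1} x1^{-1} x2^2 x1^{-1} x2^{-1} x1 x2 x1 x2 x1⟩ is isomorphic to the group presented by ⟨x, y | x^3 y^{-1} x^{-1} y^3 x^{-1} y^{-1}⟩. -/
/-!
Substituting `x = x₁ x₂`, `y = x₂` (a Nielsen transformation of the free group) turns the relator
`x³ y⁻¹ x⁻¹ y³ x⁻¹ y⁻¹` into `(x₁ x₂ x₁ x₂ x₁) · (x₂⁻¹ x₁⁻¹ x₂² x₁⁻¹ x₂⁻¹)`, a cyclic permutation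
of the first relator. An automorphism of the free group carries the normal closure of a relator
onto the normal closure of its image, and conjugate elements have the same normal closure, so the
two quotients are isomorphic.
-/

open FreeGroup

/-- Relator of the first presentation: x2⁻¹ x1⁻¹ x2² x1⁻¹ x2⁻¹ x1 x2 x1 x2 x1. -/
noncomputable def rel1 : FreeGroup (Fin 2) :=
  (of 1)⁻¹ * (of 0)⁻¹ * (of 1) ^ 2 * (of 0)⁻¹ * (of 1)⁻¹ *
    (of 0) * (of 1) * (of 0) * (of 1) * (of 0)

/-- Relator of the second presentation: x³ y⁻¹ x⁻¹ y³ x⁻¹ y⁻¹. -/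
noncomputable def rel2 : FreeGroup (Fin 2) :=
  (of 0) ^ 3 * (of 1)⁻¹ * (of 0)⁻¹ * (of 1) ^ 3 * (of 0)⁻¹ * (of 1)⁻¹

theorem Subgroup.normalClosure_singleton_eq_of_isConj {G : Type*} [Group G] {a b : G}
    (h : IsConj a b) : normalClosure {a} = normalClosure {b} := by
  have le_of_isConj : ∀ {a b : G}, IsConj a b → normalClosure {a} ≤ normalClosure {b} := by
    intro a b h
    obtain ⟨c, rfl⟩ := isConj_iff.mp h.symm
    refine normalClosure_le_normal (Set.singleton_subset_iff.mpr ?_)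
    exact normalClosure_normal.conj_mem b (subset_normalClosure (Set.mem_singleton b)) c
  exact le_antisymm (le_of_isConj h) (le_of_isConj h.symm)

def PresentedGroup.mulEquivOfIsConj {α β : Type*} (e : FreeGroup α ≃* FreeGroup β)
    {r : FreeGroup α} {s : FreeGroup β} (h : IsConj (e r) s) :
    PresentedGroup {r} ≃* PresentedGroup {s} :=
  QuotientGroup.congr _ _ e <| by
    rw [← Subgroup.normalClosure_singleton_eq_of_isConj h, ← Set.image_singleton]
    exact Subgroup.map_normalClosure _ e.toMonoidHom e.surjective

namespace FreeGroup

variable {α : Type*} [DecidableEq α]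

def transvection (i j : α) (hij : i ≠ j) : FreeGroup α ≃* FreeGroup α :=
  MonoidHom.toMulEquiv
    (lift fun k => if k = i then of i * of j else of k)
    (lift fun k => if k = i then of i * (of j)⁻¹ else of k)
    (ext_hom _ _ fun k => by by_cases hk : k = i <;> simp [hk, hij.symm])
    (ext_hom _ _ fun k => by by_cases hk : k = i <;> simp [hk, hij.symm])

theorem transvection_apply_of_self (i j : α) (hij : i ≠ j) :
    transvection i j hij (of i) = of i * of j := by
  simp [transvection]

theorem transvection_apply_of_of_ne {i k : α} (j : α) (hij : i ≠ j) (hk : k ≠ i) :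
    transvection i j hij (of k) = of k := by
  simp [transvection, hk]

end FreeGroup

theorem isConj_transvection_rel2_rel1 : IsConj (transvection 0 1 Fin.zero_ne_one rel2) rel1 := by
  refine isConj_iff.mpr ⟨(of 0 * of 1 * of 0 * of 1 * of 0)⁻¹, ?_⟩
  unfold rel1 rel2
  simp only [_root_.map_mul, _root_.map_inv, transvection_apply_of_self,
    transvection_apply_of_of_ne 1 Fin.zero_ne_one one_ne_zero, pow_two, pow_three]
  group

theorem stmt16 :
    Nonempty (PresentedGroup ({rel1} : Set (FreeGroup (Fin 2))) ≃*
              PresentedGroup ({rel2} : Set (FreeGroup (Fin 2)))) :=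
  ⟨(PresentedGroup.mulEquivOfIsConj _ isConj_transvection_rel2_rel1).symm⟩
end
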